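/- The word 1010 is tilde-non-isometric; specifically, u=11000 and v=10110 are 1010-free, dist~(u,v)=2, and every minimal tilde-transformation from u to v passes through a word containing 1010 as a factor. -/
import Mathlib


/-- Edit operations on binary words: `R i` flips the bit at position `i`,
`S i` swaps the (distinct) bits at positions `i` and `i+1`. Positions are 0-based. -/
inductive TOp where
  | R (i : ℕ)
  | S (i : ℕ)
deriving DecidableEq

namespace TOp

def apply : TOp → List Bool → List Bool
  | R i, w => w.set i (!(w.getD i false))
  | S i, w => (w.set i (w.getD (i+1) false)).set (i+1) (w.getD i false)

def valid : TOp → List Bool → Prop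
  | R i, w => i < w.length
  | S i, w => i + 1 < w.length ∧ w.getD i false ≠ w.getD (i+1) false

/-- The set of positions modified by an operation. -/
def positions : TOp → Finset ℕ
  | R i => {i}
  | S i => {i, i+1}

/-- The (leftmost) position of an operation. -/
def pos : TOp → ℕ
  | R i => i
  | S i => i

def isR : TOp → Prop
  | R _ => True
  | S _ => False

def isS : TOp → Prop
  | R _ => False
  | S _ => True

end TOp

/-- All operations of a sequence are valid when applied successively starting from `w`. -/
def validSeq : List TOp → List Bool → Prop
  | [], _ => True
  | o :: os, w => o.valid w ∧ validSeq os (o.apply w)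

def applySeq : List TOp → List Bool → List Bool
  | [], w => w
  | o :: os, w => applySeq os (o.apply w)

/-- `ops` is a tilde-transformation from `u` to `v`. -/
def Transforms (ops : List TOp) (u v : List Bool) : Prop :=
  validSeq ops u ∧ applySeq ops u = v

/-- The swap-mismatch (tilde) distance between two words. -/
noncomputable def tdist (u v : List Bool) : ℕ :=
  sInf { n | ∃ ops : List TOp, ops.length = n ∧ Transforms ops u v }

/-- Each position of the word is modified at most once along the sequence. -/
def eachPosOnce (ops : List TOp) : Prop :=
  ops.Pairwise fun o o' => Disjoint o.positions o'.positions

/-- A minimal tilde-transformation: length `tdist u v`, each position changed at most once. -/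
def MinimalTransf (ops : List TOp) (u v : List Bool) : Prop :=
  Transforms ops u v ∧ ops.length = tdist u v ∧ eachPosOnce ops

/-- The list of all words `w_0 = u, w_1, …, w_h` visited by the transformation. -/
def trajectory (ops : List TOp) (u : List Bool) : List (List Bool) :=
  List.scanl (fun w o => o.apply w) u ops

/-- `w` avoids `f` as a factor. -/
def FFree (f w : List Bool) : Prop := ¬ f <:+: w

/-- All words along the transformation are `f`-free. -/
def FreeTransf (f : List Bool) (ops : List TOp) (u : List Bool) : Prop :=
  ∀ w ∈ trajectory ops u, FFree f w

/-- `f` is tilde-isometric. -/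
def TildeIsometric (f : List Bool) : Prop :=
  ∀ u v : List Bool, u.length = v.length → f.length < u.length →
    FFree f u → FFree f v →
      ∃ ops : List TOp, MinimalTransf ops u v ∧ FreeTransf f ops u

/-- `(u,v)` is a pair of tilde-witnesses for `f`. -/
def Witnesses (f u v : List Bool) : Prop :=
  u.length = v.length ∧ FFree f u ∧ FFree f v ∧ 2 ≤ tdist u v ∧
    ∀ ops : List TOp, MinimalTransf ops u v → ¬ FreeTransf f ops u

/-- Hamming distance between equal-length words (number of mismatch positions). -/
def hdist (u v : List Bool) : ℕ := ((u.zip v).filter fun p => p.1 != p.2).length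

instance TOp.decValid (o : TOp) (w : List Bool) : Decidable (o.valid w) :=
  match o with
  | .R i => inferInstanceAs (Decidable (i < w.length))
  | .S i => inferInstanceAs (Decidable (_ ∧ _ ≠ _))

instance decValidSeq : ∀ (ops : List TOp) (w : List Bool), Decidable (validSeq ops w)
  | [], _ => .isTrue trivial
  | o :: os, w => @instDecidableAnd _ _ _ (decValidSeq os (o.apply w))

instance (ops : List TOp) (u v : List Bool) : Decidable (Transforms ops u v) :=
  inferInstanceAs (Decidable (_ ∧ _))

instance (f w : List Bool) : Decidable (FFree f w) :=
  inferInstanceAs (Decidable ¬ _)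

instance (f : List Bool) (ops : List TOp) (u : List Bool) : Decidable (FreeTransf f ops u) :=
  inferInstanceAs (Decidable (∀ w ∈ _, _))


lemma TOp.pos_lt_of_valid {o : TOp} {w : List Bool} (h : o.valid w) : o.pos < w.length := by
  cases o with
  | R i => exact h
  | S i => exact Nat.lt_of_succ_lt h.1

lemma TOp.apply_length (o : TOp) (w : List Bool) : (o.apply w).length = w.length := by
  cases o <;> simp [TOp.apply]

-- abbreviations
private def U : List Bool := [true, true, false, false, false]
private def V : List Bool := [true, false, true, true, false]
private def F : List Bool := [true, false, true, false]

lemma key (o1 o2 : TOp) (h : Transforms [o1, o2] U V) :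
    ¬ FreeTransf F [o1, o2] U := by
  have h1 : o1.valid U := h.1.1
  have h2 : o2.valid (o1.apply U) := h.1.2.1
  have b1 : o1.pos < 5 := TOp.pos_lt_of_valid h1
  have b2 : o2.pos < 5 := by
    have := TOp.pos_lt_of_valid h2
    rwa [TOp.apply_length] at this
  revert h
  cases o1 with
  | R i =>
    cases o2 with
    | R j =>
      simp only [TOp.pos] at b1 b2
      interval_cases i <;> interval_cases j <;> decide
    | S j =>
      simp only [TOp.pos] at b1 b2
      interval_cases i <;> interval_cases j <;> decide
  | S i =>
    cases o2 with
    | R j =>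
      simp only [TOp.pos] at b1 b2
      interval_cases i <;> interval_cases j <;> decide
    | S j =>
      simp only [TOp.pos] at b1 b2
      interval_cases i <;> interval_cases j <;> decide

lemma not_one (o : TOp) : ¬ Transforms [o] U V := by
  intro h
  have b : o.pos < 5 := TOp.pos_lt_of_valid h.1.1
  revert h
  cases o with
  | R i => simp only [TOp.pos] at b; interval_cases i <;> decide
  | S i => simp only [TOp.pos] at b; interval_cases i <;> decide

lemma tdist_UV : tdist U V = 2 := by
  have mem2 : 2 ∈ { n | ∃ ops : List TOp, ops.length = n ∧ Transforms ops U V } :=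
    ⟨[TOp.S 1, TOp.R 3], rfl, by decide⟩
  refine le_antisymm (Nat.sInf_le mem2) ?_
  by_contra hlt
  push_neg at hlt
  simp only [tdist] at hlt
  have hmem := Nat.sInf_mem (⟨2, mem2⟩ :
    { n | ∃ ops : List TOp, ops.length = n ∧ Transforms ops U V }.Nonempty)
  obtain ⟨ops, hlen, htr⟩ := hmem
  have hl2 : ops.length < 2 := by omega
  rcases ops with _ | ⟨o, _ | ⟨o2, t⟩⟩
  · exact absurd htr (by decide)
  · exact not_one o htr
  · simp at hl2

lemma witnesses_UV : Witnesses F U V := by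
  refine ⟨rfl, by decide, by decide, by rw [tdist_UV], ?_⟩
  intro ops hmin
  have hlen : ops.length = 2 := by rw [hmin.2.1, tdist_UV]
  obtain ⟨o1, o2, rfl⟩ := List.length_eq_two.mp hlen
  exact key o1 o2 hmin.1

theorem stmt4 :
    ¬ TildeIsometric [true, false, true, false] ∧
    Witnesses [true, false, true, false]
      [true, true, false, false, false] [true, false, true, true, false] ∧
    tdist [true, true, false, false, false] [true, false, true, true, false] = 2 := by
  refine ⟨?_, witnesses_UV, tdist_UV⟩
  intro hiso
  obtain ⟨ops, hmin, hfree⟩ := hiso U V rfl (by decide) (by decide) (by decide)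
  exact witnesses_UV.2.2.2.2 ops hmin hfree
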